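/- Let X be a nonnegative random variable with finite second moment satisfying 2(E[X])^2 ≤ E[X^2]. Then for every t > 0, log E[e^{-tX}] ≤ Var(X)·t²/2 − E[X]·t. -/

import Mathlib

open MeasureTheory ProbabilityTheory Real

/-!
Take `t = 1`; the general case is the same statement for `t X`, whose variance is `t² Var X`.
Write `m = E X`, `s = E X²`, `u = s / m`, `p = m² / s ≤ 1 / 2`. Since `(eˣ - 1 - x) / x²` is
increasing, `e^{-y}` lies below the quadratic through `(0, 1)` that is tangent to it at `y = u`, for
all `y ≥ 0`. Taking expectations, `E e^{-X}` is at most the value `1 - p + p e^{-u}` for the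
two-point law on `{0, u}` with the same first two moments. For `p ≤ 1 / 2` the Bernoulli
log-moment generating function satisfies `log (1 - p + p e^{-u}) ≤ p (1 - p) u² / 2 - p u`, and the
right side equals `Var X / 2 - m`.
-/

lemma monotoneOn_Ici_of_hasDerivAt_nonneg {f f' : ℝ → ℝ} {a : ℝ}
    (hf : ∀ x, HasDerivAt f (f' x) x) (hf' : ∀ x, a ≤ x → 0 ≤ f' x) :
    MonotoneOn f (Set.Ici a) :=
  monotoneOn_of_hasDerivWithinAt_nonneg (convex_Ici a)
    (fun x _ => (hf x).continuousAt.continuousWithinAt) (fun x _ => (hf x).hasDerivWithinAt)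
    (fun x hx => hf' x (by rw [interior_Ici] at hx; exact hx.le))

lemma exp_neg_le_one_sub_add_sq_div_two {x : ℝ} (hx : 0 ≤ x) :
    exp (-x) ≤ 1 - x + x ^ 2 / 2 := by
  have hderiv (y : ℝ) :
      HasDerivAt (fun y => 1 - y + y ^ 2 / 2 - exp (-y)) (-1 + y + exp (-y)) y := by
    refine (((hasDerivAt_id y).const_sub 1).add ((hasDerivAt_pow 2 y).div_const 2)).sub
      (hasDerivAt_neg y).exp |>.congr_deriv ?_
    simp
  have := monotoneOn_Ici_of_hasDerivAt_nonneg hderiv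
    (fun y _ => by linarith [add_one_le_exp (-y)]) Set.self_mem_Ici hx hx
  simp only [neg_zero, exp_zero] at this
  linarith

lemma sub_two_mul_exp_add_add_two_nonneg {x : ℝ} (hx : 0 ≤ x) :
    0 ≤ (x - 2) * exp x + x + 2 := by
  have hderiv (y : ℝ) :
      HasDerivAt (fun y => (y - 2) * exp y + y + 2) ((y - 1) * exp y + 1) y := by
    refine ((((hasDerivAt_id y).sub_const 2).mul (hasDerivAt_exp y)).add
      (hasDerivAt_id y)).add_const 2 |>.congr_deriv ?_
    simp; ring
  have hderiv_nonneg (y : ℝ) : 0 ≤ (y - 1) * exp y + 1 := by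
    have := mul_le_mul_of_nonneg_left (add_one_le_exp (-y)) (exp_pos y).le
    rw [← exp_add, add_neg_cancel, exp_zero] at this
    linarith
  have := monotoneOn_Ici_of_hasDerivAt_nonneg hderiv (fun y _ => hderiv_nonneg y)
    Set.self_mem_Ici hx hx
  simpa using this

lemma monotoneOn_exp_sub_one_sub_div_sq :
    MonotoneOn (fun x => (exp x - 1 - x) / x ^ 2) (Set.Ioi 0) := by
  refine monotoneOn_of_hasDerivWithinAt_nonneg (convex_Ioi 0)
    (f' := fun x => x * ((x - 2) * exp x + x + 2) / (x ^ 2) ^ 2) ?_ (fun x hx => ?_) ?_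
  · exact ContinuousOn.div (by fun_prop) (by fun_prop) fun x hx => pow_ne_zero 2 hx.ne'
  · rw [interior_Ioi] at hx
    have hx2 : x ^ 2 ≠ 0 := pow_ne_zero 2 hx.ne'
    have := (((hasDerivAt_exp x).sub_const 1).sub (hasDerivAt_id x)).div
      (hasDerivAt_pow 2 x) hx2
    refine this.hasDerivWithinAt.congr_deriv ?_
    simp; ring
  · intro x hx
    rw [interior_Ioi] at hx
    exact div_nonneg (mul_nonneg hx.le (sub_two_mul_exp_add_add_two_nonneg hx.le)) (by positivity)

lemma exp_sub_one_sub_mul_sq_le {w u : ℝ} (hu : 0 ≤ u) (hwu : w ≤ u) :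
    (exp w - 1 - w) * u ^ 2 ≤ (exp u - 1 - u) * w ^ 2 := by
  have hu' : u ^ 2 / 2 ≤ exp u - 1 - u := by linarith [quadratic_le_exp_of_nonneg hu]
  rcases le_or_gt w 0 with hw | hw
  · have hw' : exp w - 1 - w ≤ w ^ 2 / 2 := by
      have := exp_neg_le_one_sub_add_sq_div_two (neg_nonneg.mpr hw)
      rw [neg_neg] at this
      linarith
    calc (exp w - 1 - w) * u ^ 2 ≤ w ^ 2 / 2 * u ^ 2 := by gcongr
      _ ≤ (exp u - 1 - u) * w ^ 2 := by nlinarith [sq_nonneg w]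
  · have := monotoneOn_exp_sub_one_sub_div_sq hw (hw.trans_le hwu) hwu
    rwa [div_le_div_iff₀ (by positivity) (pow_pos (hw.trans_le hwu) 2)] at this

lemma sq_mul_exp_neg_le_quadratic {u y : ℝ} (hu : 0 ≤ u) (hy : 0 ≤ y) :
    u ^ 2 * exp (-y) ≤
      u ^ 2 * exp (-u) * (1 + u - y) + (1 - (1 + u) * exp (-u)) * (y - u) ^ 2 := by
  have h := mul_le_mul_of_nonneg_left
    (exp_sub_one_sub_mul_sq_le (w := u - y) hu (by linarith)) (exp_pos (-u)).le
  have h₁ : exp (-u) * exp (u - y) = exp (-y) := by rw [← exp_add]; ring_nf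
  have h₂ : exp (-u) * exp u = 1 := by rw [← exp_add, neg_add_cancel, exp_zero]
  linear_combination h - (u ^ 2) * h₁ + (y - u) ^ 2 * h₂

lemma one_sub_add_mul_exp_neg_pos {p : ℝ} (hp0 : 0 ≤ p) (hp : p ≤ 1) (v : ℝ) :
    0 < 1 - p + p * exp (-v) := by
  have := mul_nonneg hp0 (exp_pos (-v)).le
  rcases hp.lt_or_eq with hp | rfl
  · linarith
  · simpa using exp_pos (-v)

-- `q v = p e^{-v} / (1 - p + p e^{-v})` is the parameter of the Bernoulli law `p` tilted by
-- `e^{-v}`; `q' = -q (1 - q)` stays above `-p (1 - p)` because `q ≤ p ≤ 1 / 2`.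
lemma sub_mul_le_tilted_bernoulli {p v : ℝ} (hp0 : 0 ≤ p) (hp : p ≤ 1 / 2) (hv : 0 ≤ v) :
    p - p * (1 - p) * v ≤ p * exp (-v) / (1 - p + p * exp (-v)) := by
  set q : ℝ → ℝ := fun v => p * exp (-v) / (1 - p + p * exp (-v)) with hq
  have hA := one_sub_add_mul_exp_neg_pos hp0 (by linarith)
  have hq_le (v : ℝ) (hv : 0 ≤ v) : q v ≤ p := by
    have : exp (-v) ≤ 1 := exp_le_one_iff.mpr (by linarith)
    rw [hq, div_le_iff₀ (hA v)]
    nlinarith [mul_nonneg hp0 (sub_nonneg.mpr this)]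
  have hderiv (v : ℝ) : HasDerivAt (fun v => q v + p * (1 - p) * v)
      (p * (1 - p) - q v * (1 - q v)) v := by
    have := (((hasDerivAt_neg v).exp.const_mul p).div
      (((hasDerivAt_neg v).exp.const_mul p).const_add (1 - p)) (hA v).ne').add
      ((hasDerivAt_id v).const_mul (p * (1 - p)))
    refine this.congr_deriv ?_
    have := (hA v).ne'
    simp only [hq]
    field_simp
    ring
  have hderiv_nonneg (v : ℝ) (hv : 0 ≤ v) : 0 ≤ p * (1 - p) - q v * (1 - q v) := by
    have hqv := hq_le v hv
    have h : p * (1 - p) - q v * (1 - q v) = (p - q v) * (1 - p - q v) := by ring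
    rw [h]
    exact mul_nonneg (by linarith) (by linarith)
  have := monotoneOn_Ici_of_hasDerivAt_nonneg hderiv hderiv_nonneg Set.self_mem_Ici hv hv
  simp only [hq, neg_zero, exp_zero, mul_one, sub_add_cancel, div_one, mul_zero, add_zero] at this
  linarith

lemma one_sub_add_mul_exp_neg_le {p u : ℝ} (hp0 : 0 ≤ p) (hp : p ≤ 1 / 2) (hu : 0 ≤ u) :
    1 - p + p * exp (-u) ≤ exp (p * (1 - p) * u ^ 2 / 2 - p * u) := by
  have hA := one_sub_add_mul_exp_neg_pos hp0 (by linarith)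
  have hderiv (v : ℝ) :
      HasDerivAt (fun v => p * (1 - p) * v ^ 2 / 2 - p * v - log (1 - p + p * exp (-v)))
        (p * (1 - p) * v - p + p * exp (-v) / (1 - p + p * exp (-v))) v := by
    have := ((((hasDerivAt_pow 2 v).const_mul (p * (1 - p))).div_const 2).sub
      ((hasDerivAt_id v).const_mul p)).sub
      ((((hasDerivAt_neg v).exp.const_mul p).const_add (1 - p)).log (hA v).ne')
    refine this.congr_deriv ?_
    field_simp
    ring
  have := monotoneOn_Ici_of_hasDerivAt_nonneg hderiv
    (fun v hv => by linarith [sub_mul_le_tilted_bernoulli hp0 hp hv]) Set.self_mem_Ici hu hu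
  norm_num at this
  rw [← log_le_iff_le_exp (hA u)]
  linarith

section Moments

variable {Ω : Type*} [MeasurableSpace Ω] {μ : Measure Ω} {Y : Ω → ℝ}

lemma integrable_exp_neg_of_nonneg [IsFiniteMeasure μ] (hY : AEMeasurable Y μ)
    (hY0 : ∀ᵐ ω ∂μ, 0 ≤ Y ω) : Integrable (fun ω => exp (-Y ω)) μ := by
  refine (integrable_const (1 : ℝ)).mono' (hY.neg.exp).aestronglyMeasurable ?_
  filter_upwards [hY0] with ω hω
  rw [norm_of_nonneg (exp_pos _).le, exp_le_one_iff]
  linarith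

lemma integrable_quadratic [IsFiniteMeasure μ] (hY : MemLp Y 2 μ) (a b c : ℝ) :
    Integrable (fun ω => a + b * Y ω + c * Y ω ^ 2) μ :=
  ((integrable_const a).add ((hY.integrable one_le_two).const_mul b)).add
    (hY.integrable_sq.const_mul c)

variable [IsProbabilityMeasure μ]

lemma integral_quadratic (hY : MemLp Y 2 μ) (a b c : ℝ) :
    ∫ ω, (a + b * Y ω + c * Y ω ^ 2) ∂μ = a + b * μ[Y] + c * μ[Y ^ 2] := by
  have hY1 : Integrable Y μ := hY.integrable one_le_two
  rw [integral_add (f := fun ω => a + b * Y ω) ((integrable_const a).add (hY1.const_mul b))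
      (hY.integrable_sq.const_mul c),
    integral_add (integrable_const a) (hY1.const_mul b), integral_const, integral_const_mul,
    integral_const_mul]
  simp

lemma integral_exp_neg_le_two_point (hY0 : ∀ᵐ ω ∂μ, 0 ≤ Y ω) (hY : MemLp Y 2 μ)
    (hm : 0 < μ[Y]) :
    ∫ ω, exp (-Y ω) ∂μ ≤
      1 - μ[Y] ^ 2 / μ[Y ^ 2] + μ[Y] ^ 2 / μ[Y ^ 2] * exp (-(μ[Y ^ 2] / μ[Y])) := by
  set m := μ[Y]
  set s := μ[Y ^ 2]
  have hs : 0 < s := by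
    have := variance_nonneg Y μ
    rw [variance_eq_sub hY] at this
    nlinarith
  set u := s / m
  have hu : 0 < u := div_pos hs hm
  set c := 1 - (1 + u) * exp (-u)
  have hpt : ∀ᵐ ω ∂μ, u ^ 2 * exp (-Y ω) ≤
      (u ^ 2 * exp (-u) * (1 + u) + c * u ^ 2) + (-(u ^ 2 * exp (-u)) - 2 * c * u) * Y ω
        + c * Y ω ^ 2 := by
    filter_upwards [hY0] with ω hω
    exact (sq_mul_exp_neg_le_quadratic hu.le hω).trans_eq (by ring)
  have hint := integral_mono_ae
    ((integrable_exp_neg_of_nonneg hY.aemeasurable hY0).const_mul (u ^ 2))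
    (integrable_quadratic hY _ _ _) hpt
  rw [integral_const_mul, integral_quadratic hY] at hint
  refine le_of_mul_le_mul_left (hint.trans_eq ?_) (pow_pos hu 2)
  simp only [u, c]
  field_simp
  ring

theorem log_integral_exp_neg_le (hY0 : ∀ᵐ ω ∂μ, 0 ≤ Y ω) (hY : MemLp Y 2 μ)
    (hmom : μ[Y] ^ 2 ≤ variance Y μ) :
    log (∫ ω, exp (-Y ω) ∂μ) ≤ variance Y μ / 2 - μ[Y] := by
  have hint := integrable_exp_neg_of_nonneg hY.aemeasurable hY0
  rw [log_le_iff_le_exp (integral_exp_pos hint)]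
  have hvar := variance_eq_sub hY
  rcases (integral_nonneg_of_ae hY0).eq_or_lt with hm | hm
  · calc ∫ ω, exp (-Y ω) ∂μ ≤ ∫ _, (1 : ℝ) ∂μ := by
          refine integral_mono_ae hint (integrable_const 1) ?_
          filter_upwards [hY0] with ω hω
          rw [exp_le_one_iff]
          linarith
      _ = 1 := by simp
      _ ≤ exp (variance Y μ / 2 - μ[Y]) := by
          rw [← hm, one_le_exp_iff]
          linarith [variance_nonneg Y μ]
  · have hs : 0 < μ[Y ^ 2] := by nlinarith
    have hp : μ[Y] ^ 2 / μ[Y ^ 2] ≤ 1 / 2 := by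
      rw [div_le_iff₀ hs]
      linarith
    refine (integral_exp_neg_le_two_point hY0 hY hm).trans
      ((one_sub_add_mul_exp_neg_le (by positivity) hp (by positivity)).trans_eq ?_)
    rw [hvar]
    congr 1
    field_simp

end Moments

theorem stmt_0_general {Ω : Type*} [MeasurableSpace Ω] (μ : Measure Ω) [IsProbabilityMeasure μ]
    (X : Ω → ℝ)
    (hX0 : ∀ᵐ ω ∂μ, 0 ≤ X ω)
    (hX2 : MemLp X 2 μ)
    (hmom : 2 * (∫ ω, X ω ∂μ) ^ 2 ≤ ∫ ω, (X ω) ^ 2 ∂μ) :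
    ∀ t : ℝ, 0 < t →
      Real.log (∫ ω, Real.exp (-t * X ω) ∂μ) ≤
        variance X μ * t ^ 2 / 2 - (∫ ω, X ω ∂μ) * t := by
  intro t ht
  have hvar : μ[X] ^ 2 ≤ variance X μ := by
    rw [variance_eq_sub hX2]
    simp only [Pi.pow_apply]
    linarith
  have key := log_integral_exp_neg_le (Y := fun ω => t * X ω)
    (hX0.mono fun ω hω => mul_nonneg ht.le hω) (hX2.const_mul t)
    (by rw [variance_const_mul, integral_const_mul, mul_pow]; gcongr)
  rw [variance_const_mul, integral_const_mul] at key
  simp only [neg_mul]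
  linarith

theorem stmt_0 {Ω : Type*} [MeasurableSpace Ω] (μ : Measure Ω) [IsProbabilityMeasure μ]
    (X : Ω → ℝ) (hXmeas : AEMeasurable X μ)
    (hX0 : ∀ᵐ ω ∂μ, 0 ≤ X ω)
    (hX2 : MemLp X 2 μ)
    (hmom : 2 * (∫ ω, X ω ∂μ) ^ 2 ≤ ∫ ω, (X ω) ^ 2 ∂μ) :
    ∀ t : ℝ, 0 < t →
      Real.log (∫ ω, Real.exp (-t * X ω) ∂μ) ≤
        variance X μ * t ^ 2 / 2 - (∫ ω, X ω ∂μ) * t :=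
  stmt_0_general μ X hX0 hX2 hmom
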